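/- arXiv:1704.01654 — 5 statements merged into one kernel-verified Lean document; each statement's English description precedes it below -/
import Mathlib

section
/- In the ring R = k[x,y,z,u]/(x²,xy,y²,z²,zu,u²), the residue classes of the linear forms l₁ = x−z and l₂ = x+z satisfy l₁·l₂ = 0, and the annihilator ideals are given by (0 : l₁) = (yu, l₂) and (0 : l₂) = (yu, l₁), where (yu, l) denotes the ideal of R generated by yu and l. -/
open MvPolynomial

set_option synthInstance.maxHeartbeats 1000000
set_option maxHeartbeats 1000000

noncomputable section

/-- The defining ideal `(x², xy, y², z², zu, u²)` of Roos' ring, with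
`x = X 0`, `y = X 1`, `z = X 2`, `u = X 3`. -/
def roosIdeal (k : Type*) [Field k] : Ideal (MvPolynomial (Fin 4) k) :=
  Ideal.span {X 0 ^ 2, X 0 * X 1, X 1 ^ 2, X 2 ^ 2, X 2 * X 3, X 3 ^ 2}

/-- The ring `R = k[x,y,z,u]/(x², xy, y², z², zu, u²)`. -/
abbrev RoosRing (k : Type*) [Field k] := MvPolynomial (Fin 4) k ⧸ roosIdeal k

/-- The residue classes of the variables `x, y, z, u` in `R`. -/
def rv (k : Type*) [Field k] (i : Fin 4) : RoosRing k :=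
  Ideal.Quotient.mk (roosIdeal k) (X i)


/-! Write `l = x + c z` with `c ≠ 0`. Modulo the monomial ideal `roosIdeal`, the coefficients
of `x`, `xz`, `yz`, `xu` are well defined, since no generator divides these monomials. If
`p l ≡ 0`, these four coefficients of `p l` show that `p` has no constant term and that its linear
part is a multiple of `x - c z`; its remaining part lies in `(x, y, z, u)²`, and each quadratic
monomial lies in `(yu, x - c z)` modulo the relations. Conversely, `yu · l` and `(x - c z) l` lie
in `roosIdeal`. Taking `c = ∓1` gives both annihilators. -/

theorem Ideal.colon_bot_span_singleton_mk {A : Type*} [CommRing A] {I J : Ideal A} {a : A}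
    (h : ∀ p, p * a ∈ I ↔ p ∈ J ⊔ I) :
    (⊥ : Ideal (A ⧸ I)).colon (Ideal.span {Ideal.Quotient.mk I a}) =
      J.map (Ideal.Quotient.mk I) := by
  ext q
  obtain ⟨p, rfl⟩ := Ideal.Quotient.mk_surjective q
  rw [Ideal.mem_colon_span_singleton, ← map_mul, Submodule.mem_bot,
    Ideal.Quotient.eq_zero_iff_mem, Ideal.mem_quotient_iff_mem_sup, h]

namespace RoosRing

open Finsupp

variable {k : Type*} [Field k]

def roosExponents : Set (Fin 4 →₀ ℕ) := {m | 2 ≤ m 0 + m 1 ∨ 2 ≤ m 2 + m 3}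

lemma isUpperSet_roosExponents : IsUpperSet roosExponents := by
  intro a b hab ha
  have := hab 0; have := hab 1; have := hab 2; have := hab 3
  simp only [roosExponents, Set.mem_ofPred_eq] at ha ⊢
  omega

lemma roosIdeal_le_restrictSupportIdeal :
    roosIdeal k ≤ restrictSupportIdeal k _ isUpperSet_roosExponents := by
  rw [roosIdeal, Ideal.span_le]
  rintro f (rfl | rfl | rfl | rfl | rfl | rfl) <;>
    simp only [X, monomial_pow, monomial_mul] <;>
    exact (monomial_mem_restrictSupport k).mpr (.inl (by simp [roosExponents]))

lemma coeff_eq_zero_of_mem_roosIdeal {f : MvPolynomial (Fin 4) k} (hf : f ∈ roosIdeal k)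
    {m : Fin 4 →₀ ℕ} (h01 : m 0 + m 1 ≤ 1) (h23 : m 2 + m 3 ≤ 1) : coeff m f = 0 := by
  by_contra hm
  have := roosIdeal_le_restrictSupportIdeal hf (MvPolynomial.mem_support_iff.mpr hm)
  simp only [roosExponents, Set.mem_ofPred_eq] at this
  omega

variable {c : k} {p : MvPolynomial (Fin 4) k}

lemma sub_smul_mem_pow_idealOfVars (hc : c ≠ 0) (hp : p * (X 0 + c • X 2) ∈ roosIdeal k) :
    p - coeff (single 0 1) p • (X 0 - c • X 2) ∈ idealOfVars (Fin 4) k ^ 2 := by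
  have hx := coeff_eq_zero_of_mem_roosIdeal hp (m := single 0 1) (by simp) (by simp)
  have hxz := coeff_eq_zero_of_mem_roosIdeal hp (m := single 0 1 + single 2 1) (by simp) (by simp)
  have hyz := coeff_eq_zero_of_mem_roosIdeal hp (m := single 1 1 + single 2 1) (by simp) (by simp)
  have hxu := coeff_eq_zero_of_mem_roosIdeal hp (m := single 0 1 + single 3 1) (by simp) (by simp)
  simp [mul_add, coeff_mul_X', hc] at hx hxz hyz hxu
  rw [mem_pow_idealOfVars_iff']
  intro m hm
  obtain rfl | ⟨i, rfl⟩ : m = 0 ∨ m ∈ Set.range fun i => single i 1 := by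
    rw [range_single_one, ← degree_eq_zero_iff]
    simp only [Set.mem_ofPred_eq]
    omega
  · simp [hx]
  · fin_cases i <;> simp [hyz, hxu]
    linear_combination hxz

lemma idealOfVars_sq_le (hc : c ≠ 0) :
    idealOfVars (Fin 4) k ^ 2 ≤ Ideal.span {X 1 * X 3, X 0 - c • X 2} ⊔ roosIdeal k := by
  set J : Ideal (MvPolynomial (Fin 4) k) := Ideal.span {X 1 * X 3, X 0 - c • X 2} ⊔ roosIdeal k
  have hyu : X 1 * X 3 ∈ J := Ideal.mem_sup_left (Ideal.subset_span (by simp))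
  have hl : X 0 - c • X 2 ∈ J := Ideal.mem_sup_left (Ideal.subset_span (by simp))
  have hR : {X 0 ^ 2, X 0 * X 1, X 1 ^ 2, X 2 ^ 2, X 2 * X 3, X 3 ^ 2} ⊆
      (J : Set (MvPolynomial (Fin 4) k)) :=
    fun _ hf => Ideal.mem_sup_right (Ideal.subset_span hf)
  simp only [Set.insert_subset_iff, Set.singleton_subset_iff, SetLike.mem_coe] at hR
  obtain ⟨hxx, hxy, hyy, hzz, hzu, huu⟩ := hR
  have hxz : X 0 * X 2 ∈ J := by
    convert J.add_mem (J.mul_mem_left (X 2) hl) (J.smul_of_tower_mem c hzz) using 1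
    simp only [smul_eq_C_mul]; ring
  have hxu : X 0 * X 3 ∈ J := by
    convert J.add_mem (J.mul_mem_left (X 3) hl) (J.smul_of_tower_mem c hzu) using 1
    simp only [smul_eq_C_mul]; ring
  have hyz : X 1 * X 2 ∈ J := by
    convert J.smul_of_tower_mem c⁻¹ (J.sub_mem hxy (J.mul_mem_left (X 1) hl)) using 1
    have hcc : C c⁻¹ * C c = (1 : MvPolynomial (Fin 4) k) := by
      rw [← C_mul, inv_mul_cancel₀ hc, C_1]
    simp only [smul_eq_C_mul]
    linear_combination (-(X 1 * X 2)) * hcc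
  suffices h : ∀ i j : Fin 4, i ≤ j → X i * X j ∈ J by
    rw [pow_two, Ideal.span_mul_span', Ideal.span_le]
    rintro _ ⟨_, ⟨i, rfl⟩, _, ⟨j, rfl⟩, rfl⟩
    show X i * X j ∈ J
    rcases le_total i j with hij | hij
    · exact h i j hij
    · rw [mul_comm]; exact h j i hij
  intro i j hij
  fin_cases i <;> fin_cases j <;>
    simp only [Fin.zero_eta, Fin.mk_one, Fin.reduceFinMk, ← sq, Fin.reduceLE] at hij ⊢
  exacts [hxx, hxy, hxz, hxu, hyy, hyz, hyu, hzz, hzu, huu]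

lemma mul_mem_roosIdeal_iff (hc : c ≠ 0) :
    p * (X 0 + c • X 2) ∈ roosIdeal k ↔
      p ∈ Ideal.span {X 1 * X 3, X 0 - c • X 2} ⊔ roosIdeal k := by
  set J : Ideal (MvPolynomial (Fin 4) k) := Ideal.span {X 1 * X 3, X 0 - c • X 2} ⊔ roosIdeal k
  constructor
  · intro hp
    have hl : X 0 - c • X 2 ∈ J := Ideal.mem_sup_left (Ideal.subset_span (by simp))
    simpa using J.add_mem (idealOfVars_sq_le hc (sub_smul_mem_pow_idealOfVars hc hp))
      (J.smul_of_tower_mem (coeff (single 0 1) p) hl)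
  · suffices J ≤ (roosIdeal k).colon {X 0 + c • X 2} by
      simpa [Submodule.mem_colon_singleton] using @this p
    refine sup_le ?_ Ideal.le_colon
    rw [Ideal.span_le, Set.pair_subset_iff]
    simp only [SetLike.mem_coe, Submodule.mem_colon_singleton, smul_eq_mul]
    have hR : {X 0 ^ 2, X 0 * X 1, X 1 ^ 2, X 2 ^ 2, X 2 * X 3, X 3 ^ 2} ⊆
        (roosIdeal k : Set (MvPolynomial (Fin 4) k)) := Ideal.subset_span
    simp only [Set.insert_subset_iff, Set.singleton_subset_iff, SetLike.mem_coe] at hR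
    obtain ⟨hxx, hxy, -, hzz, hzu, -⟩ := hR
    constructor
    · convert (roosIdeal k).add_mem ((roosIdeal k).mul_mem_left (X 3) hxy)
        ((roosIdeal k).smul_of_tower_mem c ((roosIdeal k).mul_mem_left (X 1) hzu)) using 1
      simp only [smul_eq_C_mul]; ring
    · convert (roosIdeal k).sub_mem hxx ((roosIdeal k).smul_of_tower_mem (c ^ 2) hzz) using 1
      simp only [smul_eq_C_mul, map_pow]; ring

theorem colon_bot_span_rv_add_smul (hc : c ≠ 0) :
    (⊥ : Ideal (RoosRing k)).colon (Ideal.span {rv k 0 + c • rv k 2}) =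
      Ideal.span {rv k 1 * rv k 3, rv k 0 - c • rv k 2} := by
  have hsmul (f : MvPolynomial (Fin 4) k) :
      Ideal.Quotient.mk (roosIdeal k) (c • f) = c • Ideal.Quotient.mk (roosIdeal k) f :=
    map_smul (Ideal.Quotient.mkₐ k (roosIdeal k)) c f
  have hmk : rv k 0 + c • rv k 2 = Ideal.Quotient.mk (roosIdeal k) (X 0 + c • X 2) := by
    simp [rv, hsmul]
  rw [hmk, Ideal.colon_bot_span_singleton_mk fun _ => mul_mem_roosIdeal_iff hc, Ideal.map_span,
    Set.image_pair]
  simp [rv, hsmul]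

end RoosRing

theorem stmt_0 (k : Type*) [Field k] :
    (rv k 0 - rv k 2) * (rv k 0 + rv k 2) = 0 ∧
    Submodule.colon (⊥ : Ideal (RoosRing k)) (Ideal.span {rv k 0 - rv k 2}) =
      Ideal.span {rv k 1 * rv k 3, rv k 0 + rv k 2} ∧
    Submodule.colon (⊥ : Ideal (RoosRing k)) (Ideal.span {rv k 0 + rv k 2}) =
      Ideal.span {rv k 1 * rv k 3, rv k 0 - rv k 2} := by
  have h₁ := RoosRing.colon_bot_span_rv_add_smul (k := k) (neg_ne_zero.mpr one_ne_zero)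
  have h₂ := RoosRing.colon_bot_span_rv_add_smul (k := k) one_ne_zero
  simp only [neg_one_smul, one_smul, ← sub_eq_add_neg, sub_neg_eq_add] at h₁ h₂
  refine ⟨?_, h₁, h₂⟩
  have h : rv k 0 + rv k 2 ∈ Ideal.span {rv k 1 * rv k 3, rv k 0 + rv k 2} :=
    Ideal.subset_span (Set.mem_insert_of_mem _ rfl)
  rw [← h₁, Ideal.mem_colon_span_singleton, Submodule.mem_bot] at h
  rw [mul_comm, h]
end
end

section
/- In the ring R = k[x,y,z,u]/(x²,xy,y²,z²,zu,u²), the principal ideals satisfy (yu) ∩ (x−z) = (0) and (yu) ∩ (x+z) = (0). -/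
open MvPolynomial

noncomputable section

/-! In `R` the maximal ideal annihilates `yu`, so every multiple of `yu` is a scalar multiple
`c • yu`. The map `R → R/(x, z) ≅ k[y,u]/(y², u²)` kills `x ± z` but not `yu`, so `c • yu ∈ (x ± z)`
forces `c = 0`. -/

theorem MvPolynomial.aeval_mul_eq_of_forall_mul_eq_zero {σ R S : Type*} [CommSemiring R]
    [CommSemiring S] [Algebra R S] {v : σ → S} {w : S} (hvw : ∀ i, v i * w = 0)
    (p : MvPolynomial σ R) : aeval v p * w = algebraMap R S (constantCoeff p) * w := by
  induction p using MvPolynomial.induction_on with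
  | C c => simp
  | add p q hp hq => simp only [map_add, add_mul, hp, hq]
  | mul_X p i _ => simp [mul_assoc, hvw]

namespace RoosRing

variable (k : Type*) [Field k]

open DualNumber TrivSqZeroExt

theorem rv_mul_yu (i : Fin 4) : rv k i * (rv k 1 * rv k 3) = 0 := by
  have rel : ∀ p ∈ ({X 0 ^ 2, X 0 * X 1, X 1 ^ 2, X 2 ^ 2, X 2 * X 3, X 3 ^ 2} : Set _),
      Ideal.Quotient.mk (roosIdeal k) p = 0 :=
    fun _ hp => Ideal.Quotient.eq_zero_iff_mem.mpr (Ideal.subset_span hp)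
  have hxy : rv k 0 * rv k 1 = 0 := rel _ (by simp)
  have hyy : rv k 1 ^ 2 = 0 := rel _ (by simp)
  have hzu : rv k 2 * rv k 3 = 0 := rel _ (by simp)
  have huu : rv k 3 ^ 2 = 0 := rel _ (by simp)
  match i with
  | 0 => linear_combination rv k 3 * hxy
  | 1 => linear_combination rv k 3 * hyy
  | 2 => linear_combination rv k 1 * hzu
  | 3 => linear_combination rv k 1 * huu

theorem mk_eq_aeval_rv (p : MvPolynomial (Fin 4) k) :
    Ideal.Quotient.mk (roosIdeal k) p = aeval (rv k) p :=
  congrArg (· p) (aeval_unique (Ideal.Quotient.mkₐ k (roosIdeal k)))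

theorem exists_mul_yu_eq (a : RoosRing k) :
    ∃ c : k, a * (rv k 1 * rv k 3) = algebraMap k _ c * (rv k 1 * rv k 3) := by
  obtain ⟨p, rfl⟩ := Ideal.Quotient.mk_surjective a
  exact ⟨constantCoeff p, mk_eq_aeval_rv k p ▸ aeval_mul_eq_of_forall_mul_eq_zero (rv_mul_yu k) p⟩

/-- `k[y,u]/(y², u²)` is realised as `k[ε][ε]`, with `y` the outer and `u` the inner `ε`. -/
def dualDualPoint : Fin 4 → DualNumber (DualNumber k) := ![0, ε, 0, inl ε]

def toDualDual : RoosRing k →ₐ[k] DualNumber (DualNumber k) :=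
  Ideal.Quotient.liftₐ (roosIdeal k) (aeval (dualDualPoint k)) fun _ hp =>
    have hle : roosIdeal k ≤ RingHom.ker (aeval (dualDualPoint k)) := Ideal.span_le.mpr <| by
      simp [dualDualPoint, Set.insert_subset_iff, sq, eps_mul_eps, ← inl_mul]
    RingHom.mem_ker.mp (hle hp)

theorem toDualDual_rv (i : Fin 4) : toDualDual k (rv k i) = dualDualPoint k i :=
  aeval_X _ i

theorem toDualDual_yu : toDualDual k (rv k 1 * rv k 3) = inr ε := by
  ext <;> simp [toDualDual_rv, dualDualPoint]

theorem span_yu_inf_span_eq_bot {f : RoosRing k} (hf : toDualDual k f = 0) :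
    Ideal.span {rv k 1 * rv k 3} ⊓ Ideal.span {f} = ⊥ := by
  refine eq_bot_iff.mpr fun r ⟨hyu, hfr⟩ => ?_
  obtain ⟨a, rfl⟩ := Ideal.mem_span_singleton'.mp hyu
  obtain ⟨b, hb⟩ := Ideal.mem_span_singleton.mp hfr
  obtain ⟨c, hc⟩ := exists_mul_yu_eq k a
  have hφ : algebraMap k (DualNumber (DualNumber k)) c * inr ε = 0 := by
    rw [← toDualDual_yu, ← AlgHom.commutes (toDualDual k), ← map_mul, ← hc, hb, map_mul, hf,
      zero_mul]
  have hc0 : c = 0 := by simpa [algebraMap_eq_inl'] using congrArg (fun x => x.snd.snd) hφ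
  rw [Ideal.mem_bot, hc, hc0, map_zero, zero_mul]

end RoosRing

theorem stmt_1 (k : Type*) [Field k] :
    Ideal.span {rv k 1 * rv k 3} ⊓ Ideal.span {rv k 0 - rv k 2} = (⊥ : Ideal (RoosRing k)) ∧
    Ideal.span {rv k 1 * rv k 3} ⊓ Ideal.span {rv k 0 + rv k 2} = (⊥ : Ideal (RoosRing k)) := by
  have hx : RoosRing.toDualDual k (rv k 0) = 0 := RoosRing.toDualDual_rv k 0
  have hz : RoosRing.toDualDual k (rv k 2) = 0 := RoosRing.toDualDual_rv k 2
  exact ⟨RoosRing.span_yu_inf_span_eq_bot k (by rw [map_sub, hx, hz, sub_zero]),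
    RoosRing.span_yu_inf_span_eq_bot k (by rw [map_add, hx, hz, add_zero])⟩
end
end

section
/- Let U = ℚ[a₁,…,a₁₂]/H, where H is the ideal generated by the 2×2 minors of the 4×5 matrix with rows (0, a₁, a₂+a₅, a₃+a₆+a₉, a₄+a₇+a₁₀), (a₁, a₂, a₃, a₄, a₈+a₁₁), (a₅, a₆, a₇, a₈, a₁₂), (a₉, a₁₀, a₁₁, a₁₂, 0). Consider the ideals I₇=(a₁₂,a₁₁,a₁₀,a₉,a₈,a₇,a₄), I₈=(a₁₂,…,a₇,a₄,a₆+a₃), I₉=(a₁₂,…,a₆,a₄,a₃), I₁₀=(a₁₂,…,a₆,a₅+a₂,a₄,a₃), I₁₁=(a₁₂,…,a₂), I₁₂=(a₁₂,…,a₃), I₁₃=(a₁₂,…,a₆,a₄), I₁₄=(a₁₂,…,a₄), and the maximal ideal 𝔪=(a₁,…,a₁₂). Then: (I₈ : I₉) = I₁₁, (I₉ : I₁₀) = 𝔪, (I₁₀ : I₁₁) = 𝔪, (I₉ : I₁₂) = 𝔪, (I₇ : I₁₃) = I₁₁, (I₁₃ : I₁₄) = 𝔪, and (I₁₁ : 𝔪)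 = 𝔪. -/
open MvPolynomial

set_option synthInstance.maxHeartbeats 1000000
set_option maxHeartbeats 1000000

noncomputable section

/-- The 4×5 matrix with rows `(0, a₁, a₂+a₅, a₃+a₆+a₉, a₄+a₇+a₁₀)`,
`(a₁, a₂, a₃, a₄, a₈+a₁₁)`, `(a₅, a₆, a₇, a₈, a₁₂)`, `(a₉, a₁₀, a₁₁, a₁₂, 0)`,
where `aᵢ = X (i-1)`. -/
def segMat45 : Matrix (Fin 4) (Fin 5) (MvPolynomial (Fin 12) ℚ) :=
  !![0, X 0, X 1 + X 4, X 2 + X 5 + X 8, X 3 + X 6 + X 9;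
     X 0, X 1, X 2, X 3, X 7 + X 10;
     X 4, X 5, X 6, X 7, X 11;
     X 8, X 9, X 10, X 11, 0]

/-- The ideal `H` generated by the 2×2 minors of `segMat45`. -/
def segIdeal45 : Ideal (MvPolynomial (Fin 12) ℚ) :=
  Ideal.span {p | ∃ (i i' : Fin 4) (j j' : Fin 5), i < i' ∧ j < j' ∧
    p = segMat45 i j * segMat45 i' j' - segMat45 i j' * segMat45 i' j}

/-- The artinian reduction `U = ℚ[a₁,…,a₁₂]/H` of the Segre product `S_{4,5}`. -/
abbrev SegU45 := MvPolynomial (Fin 12) ℚ ⧸ segIdeal45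

/-- The residue class of `a_{i+1} = X i` in `U` (zero-based index). -/
def va (i : Fin 12) : SegU45 := Ideal.Quotient.mk segIdeal45 (X i)

def KI₁ : Ideal SegU45 := Ideal.span {va 11}
def KI₂ : Ideal SegU45 := Ideal.span {va 11, va 10}
def KI₃ : Ideal SegU45 := Ideal.span {va 11, va 10, va 9}
def KI₄ : Ideal SegU45 := Ideal.span {va 11, va 10, va 9, va 8}
def KI₅ : Ideal SegU45 := Ideal.span {va 11, va 10, va 9, va 8, va 7}
def KI₆ : Ideal SegU45 := Ideal.span {va 11, va 10, va 9, va 8, va 7, va 6 + va 3}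
def KI₇ : Ideal SegU45 := Ideal.span {va 11, va 10, va 9, va 8, va 7, va 6, va 3}
def KI₈ : Ideal SegU45 :=
  Ideal.span {va 11, va 10, va 9, va 8, va 7, va 6, va 3, va 5 + va 2}
def KI₉ : Ideal SegU45 :=
  Ideal.span {va 11, va 10, va 9, va 8, va 7, va 6, va 5, va 3, va 2}
def KI₁₀ : Ideal SegU45 :=
  Ideal.span {va 11, va 10, va 9, va 8, va 7, va 6, va 5, va 4 + va 1, va 3, va 2}
def KI₁₁ : Ideal SegU45 :=
  Ideal.span {va 11, va 10, va 9, va 8, va 7, va 6, va 5, va 4, va 3, va 2, va 1}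
def KI₁₂ : Ideal SegU45 :=
  Ideal.span {va 11, va 10, va 9, va 8, va 7, va 6, va 5, va 4, va 3, va 2}
def KI₁₃ : Ideal SegU45 := Ideal.span {va 11, va 10, va 9, va 8, va 7, va 6, va 5, va 3}
def KI₁₄ : Ideal SegU45 :=
  Ideal.span {va 11, va 10, va 9, va 8, va 7, va 6, va 5, va 4, va 3}
def Km : Ideal SegU45 := Ideal.span (Set.range va)

/-!
The ring `U` is graded, generated in degree one by the `aᵢ`, with quadratic relations; since
`a₁² = 0`, every element of `U` is `α + β a₁` modulo `I₁₁`, and `𝔪` is maximal. The inclusions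
`⊇` between the colon ideals come from a handful of products of generators, each read off from
the `2 × 2` minors (for instance `a₃a₆ = a₂a₇`). The inclusions `⊆` come from ring maps out of `U`
killing the smaller ideal. An assignment `aᵢ ↦ vᵢ ε` into the dual numbers kills all quadrics, so
it shows that the colon ideals expected to be `𝔪` are proper. For `(I₈ : I₉) = (I₇ : I₁₃) = I₁₁`,
one needs that `(α + β a₁) a₆ ∈ I₈` forces `α = β = 0`; this is detected by a map onto a
six-dimensional ring whose degree-two part is a nondegenerate quadratic form on four generators,
sending `a₁a₆` to a nonzero multiple of the socle.
-/

namespace Ideal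

variable {R : Type*} [CommRing R]

theorem span_le_sup_span {S T E : Set R} (h : S ⊆ T ∪ E) : span S ≤ span T ⊔ span E := by
  rw [← span_union]
  exact span_mono h

theorem le_colon_of_le_sup_span {I J K : Ideal R} {E Y : Set R}
    (hK : K ≤ I ⊔ span E) (hJ : J ≤ I ⊔ span Y) (hEY : ∀ e ∈ E, ∀ y ∈ Y, e * y ∈ I) :
    K ≤ I.colon J := by
  have hmul : (I ⊔ span E) * (I ⊔ span Y) ≤ I := by
    rw [sup_mul, mul_sup, mul_sup, span_mul_span']
    refine sup_le (sup_le mul_le_left mul_le_left) (sup_le mul_le_right (span_le.mpr ?_))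
    rintro _ ⟨e, he, y, hy, rfl⟩
    exact hEY e he y hy
  intro r hr
  rw [Submodule.mem_colon]
  intro s hs
  exact hmul (mul_mem_mul (hK hr) (hJ hs))

theorem colon_eq_of_isMaximal {m I : Ideal R} {J : Set R} (hm : m.IsMaximal)
    (hle : m ≤ I.colon J) (hJ : ¬J ⊆ I) : I.colon J = m :=
  (hm.eq_of_le (by rwa [Ne, Submodule.colon_eq_top_iff_subset]) hle).symm

theorem colon_eq_of_forall_exists_sub_mem {I K : Ideal R} {J V : Set R} {j : R}
    (hK : K ≤ I.colon J) (hj : j ∈ J) (hV : ∀ r, ∃ s ∈ V, r - s ∈ K)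
    (hVj : ∀ s ∈ V, s * j ∈ I → s = 0) : I.colon J = K := by
  refine le_antisymm (fun r hr => ?_) hK
  obtain ⟨s, hsV, hrs⟩ := hV r
  have hs : s ∈ I.colon J := by simpa using sub_mem hr (hK hrs)
  rw [hVj s hsV (Submodule.mem_colon.mp hs j hj), sub_zero] at hrs
  exact hrs

theorem isMaximal_of_forall_exists_sub_algebraMap_mem {k : Type*} [Field k] [Algebra k R]
    {m : Ideal R} (hm : m ≠ ⊤) (h : ∀ r : R, ∃ a : k, r - algebraMap k R a ∈ m) :
    m.IsMaximal := by
  refine ⟨⟨hm, fun J hmJ => ?_⟩⟩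
  obtain ⟨r, hrJ, hrm⟩ := SetLike.exists_of_lt hmJ
  obtain ⟨a, ha⟩ := h r
  have ha0 : a ≠ 0 := by
    rintro rfl
    exact hrm (by simpa using ha)
  have haJ : algebraMap k R a ∈ J := by simpa using sub_mem hrJ (hmJ.le ha)
  exact J.eq_top_of_isUnit_mem haJ ((isUnit_iff_ne_zero.mpr ha0).map _)

theorem notMem_span_of_map_eq_zero {S : Type*} [Semiring S] (f : R →+* S) {T : Set R} {x : R}
    (hT : ∀ t ∈ T, f t = 0) (hx : f x ≠ 0) : x ∉ span T :=
  fun h => hx (span_le.mpr (fun t ht => RingHom.mem_ker.mpr (hT t ht)) h)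

end Ideal

/-- `K ⊕ K⁴ ⊕ K`, graded in degrees `0, 1, 2`, where the product of two degree-one elements
`(p, q, r, s)` and `(p', q', r', s')` is `pq' + qp' + rr' + ss'` in degree two. -/
@[ext] structure QuadAlg (K : Type*) where
  a : K
  p : K
  q : K
  r : K
  s : K
  c : K

namespace QuadAlg

variable {K : Type*} [CommRing K]

instance : Zero (QuadAlg K) := ⟨⟨0, 0, 0, 0, 0, 0⟩⟩
instance : One (QuadAlg K) := ⟨⟨1, 0, 0, 0, 0, 0⟩⟩
instance : Add (QuadAlg K) :=
  ⟨fun x y => ⟨x.a + y.a, x.p + y.p, x.q + y.q, x.r + y.r, x.s + y.s, x.c + y.c⟩⟩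
instance : Neg (QuadAlg K) := ⟨fun x => ⟨-x.a, -x.p, -x.q, -x.r, -x.s, -x.c⟩⟩
instance : Mul (QuadAlg K) :=
  ⟨fun x y => ⟨x.a * y.a, x.a * y.p + x.p * y.a, x.a * y.q + x.q * y.a, x.a * y.r + x.r * y.a,
    x.a * y.s + x.s * y.a,
    x.a * y.c + x.c * y.a + x.p * y.q + x.q * y.p + x.r * y.r + x.s * y.s⟩⟩

theorem zero_def : (0 : QuadAlg K) = ⟨0, 0, 0, 0, 0, 0⟩ := rfl
theorem one_def : (1 : QuadAlg K) = ⟨1, 0, 0, 0, 0, 0⟩ := rfl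
theorem add_def (x y : QuadAlg K) :
    x + y = ⟨x.a + y.a, x.p + y.p, x.q + y.q, x.r + y.r, x.s + y.s, x.c + y.c⟩ := rfl
theorem neg_def (x : QuadAlg K) : -x = ⟨-x.a, -x.p, -x.q, -x.r, -x.s, -x.c⟩ := rfl
theorem mul_def (x y : QuadAlg K) : x * y =
    ⟨x.a * y.a, x.a * y.p + x.p * y.a, x.a * y.q + x.q * y.a, x.a * y.r + x.r * y.a,
      x.a * y.s + x.s * y.a,
      x.a * y.c + x.c * y.a + x.p * y.q + x.q * y.p + x.r * y.r + x.s * y.s⟩ := rfl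

instance : CommRing (QuadAlg K) where
  add_assoc _ _ _ := by ext <;> simp only [add_def] <;> ring
  zero_add _ := by ext <;> simp only [add_def, zero_def] <;> ring
  add_zero _ := by ext <;> simp only [add_def, zero_def] <;> ring
  add_comm _ _ := by ext <;> simp only [add_def] <;> ring
  neg_add_cancel _ := by ext <;> simp only [add_def, neg_def, zero_def] <;> ring
  mul_assoc _ _ _ := by ext <;> simp only [mul_def] <;> ring
  one_mul _ := by ext <;> simp only [mul_def, one_def] <;> ring
  mul_one _ := by ext <;> simp only [mul_def, one_def] <;> ring
  left_distrib _ _ _ := by ext <;> simp only [mul_def, add_def] <;> ring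
  right_distrib _ _ _ := by ext <;> simp only [mul_def, add_def] <;> ring
  zero_mul _ := by ext <;> simp only [mul_def, zero_def] <;> ring
  mul_zero _ := by ext <;> simp only [mul_def, zero_def] <;> ring
  mul_comm _ _ := by ext <;> simp only [mul_def] <;> ring
  nsmul := nsmulRec
  zsmul := zsmulRec

def const : K →+* QuadAlg K where
  toFun k := ⟨k, 0, 0, 0, 0, 0⟩
  map_one' := rfl
  map_mul' _ _ := by ext <;> simp only [mul_def] <;> ring
  map_zero' := rfl
  map_add' _ _ := by ext <;> simp only [add_def] <;> ring

def ofVec : (Fin 4 → ℤ) →+ QuadAlg K where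
  toFun u := ⟨0, u 0, u 1, u 2, u 3, 0⟩
  map_zero' := by ext <;> simp [zero_def]
  map_add' _ _ := by ext <;> simp [add_def]

def form (u w : Fin 4 → ℤ) : ℤ := u 0 * w 1 + u 1 * w 0 + u 2 * w 2 + u 3 * w 3

theorem ofVec_mul_ofVec (u w : Fin 4 → ℤ) :
    (ofVec u * ofVec w : QuadAlg K) = ⟨0, 0, 0, 0, 0, form u w⟩ := by
  ext <;> simp [ofVec, mul_def, form]

end QuadAlg

/-- `segMat45` is `segPattern X` by definition. -/
def segPattern {M : Type*} [AddCommMonoid M] (x : Fin 12 → M) : Matrix (Fin 4) (Fin 5) M :=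
  !![0, x 0, x 1 + x 4, x 2 + x 5 + x 8, x 3 + x 6 + x 9;
     x 0, x 1, x 2, x 3, x 7 + x 10;
     x 4, x 5, x 6, x 7, x 11;
     x 8, x 9, x 10, x 11, 0]

theorem segPattern_comp {M N F : Type*} [AddCommMonoid M] [AddCommMonoid N] [FunLike F M N]
    [AddMonoidHomClass F M N] (f : F) (x : Fin 12 → M) :
    segPattern (f ∘ x) = (segPattern x).map f := by
  ext i j
  fin_cases i <;> fin_cases j <;> simp [segPattern]

def TwoMinorsVanish {R m n : Type*} [Mul R] (M : Matrix m n R) : Prop :=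
  ∀ i i' j j', M i j * M i' j' = M i j' * M i' j

section SegLift

variable {S : Type*} [CommRing S] (f : ℚ →+* S) (x : Fin 12 → S)

theorem segIdeal45_le_ker_eval₂Hom (hx : TwoMinorsVanish (segPattern x)) :
    segIdeal45 ≤ RingHom.ker (eval₂Hom f x) := by
  have hentry (i j) : eval₂Hom f x (segMat45 i j) = segPattern x i j := by
    have h := congrFun₂ (segPattern_comp (eval₂Hom f x) X) i j
    rw [show ⇑(eval₂Hom f x) ∘ X = x from funext (eval₂Hom_X' f x)] at h
    exact h.symm
  rw [segIdeal45, Ideal.span_le]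
  rintro _ ⟨i, i', j, j', -, -, rfl⟩
  rw [SetLike.mem_coe, RingHom.mem_ker, map_sub, map_mul, map_mul, hentry, hentry, hentry, hentry,
    hx, sub_self]

def segLift (hx : TwoMinorsVanish (segPattern x)) : SegU45 →+* S :=
  Ideal.Quotient.lift segIdeal45 (eval₂Hom f x)
    (fun _ hp => RingHom.mem_ker.mp (segIdeal45_le_ker_eval₂Hom f x hx hp))

@[simp] theorem segLift_va (hx : TwoMinorsVanish (segPattern x)) (k : Fin 12) :
    segLift f x hx (va k) = x k := by
  rw [segLift, va, Ideal.Quotient.lift_mk, eval₂Hom_X']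

@[simp] theorem segLift_algebraMap (hx : TwoMinorsVanish (segPattern x)) (a : ℚ) :
    segLift f x hx (algebraMap ℚ SegU45 a) = f a :=
  eval₂Hom_C f x a

end SegLift

theorem twoMinorsVanish_segPattern_inr (v : Fin 12 → ℚ) :
    TwoMinorsVanish (segPattern (TrivSqZeroExt.inrHom ℚ ℚ ∘ v)) := fun i i' j j' => by
  simp only [segPattern_comp, Matrix.map_apply, TrivSqZeroExt.inrHom_apply,
    TrivSqZeroExt.inr_mul_inr]

def dualPoint (v : Fin 12 → ℚ) : SegU45 →+* DualNumber ℚ :=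
  segLift (algebraMap ℚ _) _ (twoMinorsVanish_segPattern_inr v)

theorem dualPoint_va (v : Fin 12 → ℚ) (k : Fin 12) :
    dualPoint v (va k) = TrivSqZeroExt.inr (v k) := by
  simp [dualPoint]

/-- Coordinates `(p, q, r, s)` of the images of `a₁, …, a₁₂` in `QuadAlg ℚ`. -/
def wPt : Fin 12 → Fin 4 → ℤ :=
  ![![1, 0, 0, 0], ![0, 0, -1, 1], ![0, 1, 0, 0], 0, ![0, 0, 1, 0], ![0, -1, 0, 0],
    0, 0, 0, 0, 0, 0]

theorem form_segPattern_wPt : ∀ i i' j j',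
    QuadAlg.form (segPattern wPt i j) (segPattern wPt i' j') =
      QuadAlg.form (segPattern wPt i j') (segPattern wPt i' j) := by
  decide

theorem twoMinorsVanish_segPattern_wPt :
    TwoMinorsVanish (segPattern (QuadAlg.ofVec ∘ wPt : Fin 12 → QuadAlg ℚ)) := fun i i' j j' => by
  simp only [segPattern_comp, Matrix.map_apply, QuadAlg.ofVec_mul_ofVec, form_segPattern_wPt]

def quadPoint : SegU45 →+* QuadAlg ℚ :=
  segLift QuadAlg.const _ twoMinorsVanish_segPattern_wPt

theorem quadPoint_va (k : Fin 12) : quadPoint (va k) = QuadAlg.ofVec (wPt k) := by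
  simp [quadPoint]

theorem segPattern_va_minor (i i' : Fin 4) (j j' : Fin 5) (hi : i < i' := by decide)
    (hj : j < j' := by decide) :
    segPattern va i j * segPattern va i' j' = segPattern va i j' * segPattern va i' j := by
  have h : segPattern va = segMat45.map (Ideal.Quotient.mk segIdeal45) :=
    segPattern_comp (Ideal.Quotient.mk segIdeal45) X
  rw [h, ← sub_eq_zero]
  simp only [Matrix.map_apply, ← map_mul, ← map_sub, Ideal.Quotient.eq_zero_iff_mem]
  exact Ideal.subset_span ⟨i, i', j, j', hi, hj, rfl⟩

theorem va0_mul_va0 : va 0 * va 0 = 0 := by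
  linear_combination (norm := (simp only [segPattern, Matrix.of_apply, Matrix.cons_val]; ring1))
    -segPattern_va_minor 0 1 0 1

theorem va0_mul_va1 : va 0 * va 1 = 0 := by
  linear_combination (norm := (simp only [segPattern, Matrix.of_apply, Matrix.cons_val]; ring1))
    -segPattern_va_minor 0 1 0 2 + segPattern_va_minor 0 2 0 1

theorem va0_mul_va4 : va 0 * va 4 = 0 := by
  linear_combination (norm := (simp only [segPattern, Matrix.of_apply, Matrix.cons_val]; ring1))
    -segPattern_va_minor 0 2 0 1

theorem va1_mul_va4 : va 1 * va 4 = va 0 * va 5 :=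
  (segPattern_va_minor 1 2 0 1).symm

theorem va4_mul_va4 : va 4 * va 4 = -(va 0 * va 5) := by
  linear_combination (norm := (simp only [segPattern, Matrix.of_apply, Matrix.cons_val]; ring1))
    -segPattern_va_minor 0 2 0 2 + segPattern_va_minor 1 2 0 1

theorem va1_mul_va1 : va 1 * va 1 = -2 * (va 0 * va 5) := by
  linear_combination (norm := (simp only [segPattern, Matrix.of_apply, Matrix.cons_val]; ring1))
    -segPattern_va_minor 0 1 0 3 - segPattern_va_minor 0 1 1 2 + segPattern_va_minor 0 3 0 1 +
      segPattern_va_minor 1 2 0 1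

theorem va2_mul_va4 : va 2 * va 4 = va 0 * va 6 :=
  (segPattern_va_minor 1 2 0 2).symm

theorem va1_mul_va5 : va 1 * va 5 = 2 * (va 0 * va 6) - va 0 * va 9 := by
  linear_combination (norm := (simp only [segPattern, Matrix.of_apply, Matrix.cons_val]; ring1))
    segPattern_va_minor 0 2 0 3 - segPattern_va_minor 0 2 1 2 - segPattern_va_minor 0 3 0 2 -
      segPattern_va_minor 1 2 0 2 + segPattern_va_minor 1 3 0 1

theorem va2_mul_va5 : va 2 * va 5 = va 1 * va 6 :=
  (segPattern_va_minor 1 2 1 2).symm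

theorem va4_mul_va5 : va 4 * va 5 = va 0 * va 9 - va 0 * va 6 := by
  linear_combination (norm := (simp only [segPattern, Matrix.of_apply, Matrix.cons_val]; ring1))
    -segPattern_va_minor 0 2 0 3 + segPattern_va_minor 0 3 0 2 + segPattern_va_minor 1 2 0 2 -
      segPattern_va_minor 1 3 0 1

theorem va5_mul_va5 :
    va 5 * va 5 = va 0 * va 7 + va 1 * va 9 - va 0 * va 10 - va 1 * va 6 := by
  linear_combination (norm := (simp only [segPattern, Matrix.of_apply, Matrix.cons_val]; ring1))
    -segPattern_va_minor 0 2 1 3 + segPattern_va_minor 0 3 1 2 + segPattern_va_minor 1 2 1 2 +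
      segPattern_va_minor 2 3 0 1

theorem va_mem_KI₁₁ {k : Fin 12} (hk : k ≠ 0) : va k ∈ KI₁₁ := by
  fin_cases k
  · exact absurd rfl hk
  all_goals exact Ideal.subset_span (by simp)

theorem exists_sub_mem_KI₁₁ (r : SegU45) :
    ∃ a b : ℚ, r - (algebraMap ℚ SegU45 a + algebraMap ℚ SegU45 b * va 0) ∈ KI₁₁ := by
  obtain ⟨p, rfl⟩ := Ideal.Quotient.mk_surjective r
  induction p using MvPolynomial.induction_on with
  | C a =>
    exact ⟨a, 0, by simp [show Ideal.Quotient.mk segIdeal45 (C a) = algebraMap ℚ _ a from rfl]⟩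
  | add p q hp hq =>
    obtain ⟨a, b, hp⟩ := hp
    obtain ⟨a', b', hq⟩ := hq
    refine ⟨a + a', b + b', ?_⟩
    convert add_mem hp hq using 1
    simp only [map_add]
    ring
  | mul_X p k hp =>
    obtain ⟨a, b, hp⟩ := hp
    rw [map_mul, ← va]
    by_cases hk : k = 0
    · subst hk
      refine ⟨0, a, ?_⟩
      rw [map_zero, zero_add]
      convert Ideal.mul_mem_right (va 0) _ hp using 1
      linear_combination (algebraMap ℚ SegU45 b) * va0_mul_va0
    · exact ⟨0, 0, by simpa using Ideal.mul_mem_left _ _ (va_mem_KI₁₁ hk)⟩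

theorem KI₁₁_le_Km : KI₁₁ ≤ Km := Ideal.span_mono (by simp [Set.insert_subset_iff])

theorem Km_isMaximal : Km.IsMaximal := by
  refine Ideal.isMaximal_of_forall_exists_sub_algebraMap_mem (k := ℚ) ?_ fun r => ?_
  · rw [Ne, Ideal.eq_top_iff_one]
    exact Ideal.notMem_span_of_map_eq_zero (dualPoint 0)
      (by rintro _ ⟨k, rfl⟩; simp [dualPoint_va]) (by simp)
  · obtain ⟨a, b, h⟩ := exists_sub_mem_KI₁₁ r
    refine ⟨a, ?_⟩
    convert add_mem (KI₁₁_le_Km h)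
      (Ideal.mul_mem_left Km (algebraMap ℚ _ b) (Ideal.subset_span ⟨0, rfl⟩)) using 1
    ring

theorem KI₇_le_KI₈ : KI₇ ≤ KI₈ := Ideal.span_mono (by simp [Set.insert_subset_iff])

theorem KI₈_le_ker_quadPoint : KI₈ ≤ RingHom.ker quadPoint := by
  rw [KI₈, Ideal.span_le]
  simp [Set.insert_subset_iff, quadPoint_va, wPt, QuadAlg.ofVec, QuadAlg.add_def, QuadAlg.zero_def]

theorem quadPoint_mul_va5 (a b : ℚ) :
    quadPoint ((algebraMap ℚ SegU45 a + algebraMap ℚ SegU45 b * va 0) * va 5) =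
      ⟨0, 0, -a, 0, 0, -b⟩ := by
  simp only [map_mul, map_add, quadPoint, segLift_algebraMap, segLift_va]
  ext <;> simp [QuadAlg.const, QuadAlg.ofVec, wPt, QuadAlg.mul_def, QuadAlg.add_def]

theorem colon_eq_KI₁₁ {I : Ideal SegU45} {J : Set SegU45} (hI : I ≤ RingHom.ker quadPoint)
    (hJ : va 5 ∈ J) (hK : KI₁₁ ≤ I.colon J) : I.colon J = KI₁₁ := by
  refine Ideal.colon_eq_of_forall_exists_sub_mem hK hJ
    (V := Set.range fun ab : ℚ × ℚ => algebraMap ℚ SegU45 ab.1 + algebraMap ℚ SegU45 ab.2 * va 0)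
    (fun r => ?_) ?_
  · obtain ⟨a, b, h⟩ := exists_sub_mem_KI₁₁ r
    exact ⟨_, ⟨(a, b), rfl⟩, h⟩
  · rintro _ ⟨⟨a, b⟩, rfl⟩ h
    dsimp only at h ⊢
    have h0 := RingHom.mem_ker.mp (hI h)
    rw [quadPoint_mul_va5, QuadAlg.zero_def, QuadAlg.mk.injEq] at h0
    obtain ⟨-, -, ha, -, -, hb⟩ := h0
    simp [neg_eq_zero.mp ha, neg_eq_zero.mp hb]

theorem mul_va5_mem_KI₇ {e : SegU45} (he : e ∈ ({va 1, va 2, va 4, va 5} : Set SegU45)) :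
    e * va 5 ∈ KI₇ := by
  rcases he with rfl | rfl | rfl | rfl <;>
    simp only [va1_mul_va5, va2_mul_va5, va4_mul_va5, va5_mul_va5] <;>
    repeat' first
      | (apply Ideal.subset_span; simp; done)
      | apply sub_mem | apply add_mem | apply Ideal.mul_mem_left

theorem mul_mem_of_va5_mem {I : Ideal SegU45} (h5 : va 5 ∈ I) {e y : SegU45}
    (he : e ∈ ({va 0, va 1, va 4} : Set SegU45)) (hy : y ∈ ({va 1, va 4} : Set SegU45)) :
    e * y ∈ I := by
  rcases he with rfl | rfl | rfl <;> rcases hy with rfl | rfl <;>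
    simp only [va0_mul_va1, va0_mul_va4, va1_mul_va1, va1_mul_va4, mul_comm (va 4) (va 1),
      va4_mul_va4, neg_mem_iff, zero_mem] <;>
    repeat' first
      | exact h5
      | apply Ideal.mul_mem_left

theorem colon_KI₈_KI₉ : Submodule.colon KI₈ KI₉ = KI₁₁ := by
  refine colon_eq_KI₁₁ KI₈_le_ker_quadPoint (Ideal.subset_span (by simp)) <|
    Ideal.le_colon_of_le_sup_span (E := {va 1, va 2, va 4, va 5}) (Y := {va 5, va 2})
      (Ideal.span_le_sup_span (by simp [Set.insert_subset_iff]))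
      (Ideal.span_le_sup_span (by simp [Set.insert_subset_iff])) fun e he y hy => ?_
  have h5 := KI₇_le_KI₈ (mul_va5_mem_KI₇ he)
  rcases hy with rfl | rfl
  · exact h5
  · rw [show e * va 2 = e * (va 5 + va 2) - e * va 5 by ring]
    exact sub_mem (Ideal.mul_mem_left _ _ (Ideal.subset_span (by simp))) h5

theorem colon_KI₇_KI₁₃ : Submodule.colon KI₇ KI₁₃ = KI₁₁ :=
  colon_eq_KI₁₁ (KI₇_le_KI₈.trans KI₈_le_ker_quadPoint) (Ideal.subset_span (by simp)) <|
    Ideal.le_colon_of_le_sup_span (E := {va 1, va 2, va 4, va 5}) (Y := {va 5})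
      (Ideal.span_le_sup_span (by simp [Set.insert_subset_iff]))
      (Ideal.span_le_sup_span (by simp [Set.insert_subset_iff]))
      fun _ he _ hy => hy ▸ mul_va5_mem_KI₇ he

theorem colon_KI₉_KI₁₀ : Submodule.colon KI₉ KI₁₀ = Km := by
  have hnot : va 4 + va 1 ∉ KI₉ :=
    Ideal.notMem_span_of_map_eq_zero (dualPoint (Pi.single 1 1 + Pi.single 4 1))
      (by simp [dualPoint_va]) (by simp [dualPoint_va, TrivSqZeroExt.ext_iff])
  refine Ideal.colon_eq_of_isMaximal Km_isMaximal
    (Ideal.le_colon_of_le_sup_span (E := {va 0, va 1, va 4}) (Y := {va 4 + va 1})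
      (Ideal.span_le_sup_span (Set.range_subset_iff.mpr fun k => by fin_cases k <;> simp))
      (Ideal.span_le_sup_span (by simp [Set.insert_subset_iff])) fun e he y hy => ?_)
    (fun h => hnot (h (Ideal.subset_span (by simp))))
  have h5 : va 5 ∈ KI₉ := Ideal.subset_span (by simp)
  rw [hy, mul_add]
  exact add_mem (mul_mem_of_va5_mem h5 he (by simp)) (mul_mem_of_va5_mem h5 he (by simp))

theorem colon_KI₁₀_KI₁₁ : Submodule.colon KI₁₀ KI₁₁ = Km := by
  have hnot : va 4 ∉ KI₁₀ :=
    Ideal.notMem_span_of_map_eq_zero (dualPoint (Pi.single 4 1 - Pi.single 1 1))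
      (by simp [dualPoint_va]) (by simp [dualPoint_va, TrivSqZeroExt.ext_iff])
  exact Ideal.colon_eq_of_isMaximal Km_isMaximal
    (Ideal.le_colon_of_le_sup_span (E := {va 0, va 1, va 4}) (Y := {va 1, va 4})
      (Ideal.span_le_sup_span (Set.range_subset_iff.mpr fun k => by fin_cases k <;> simp))
      (Ideal.span_le_sup_span (by simp [Set.insert_subset_iff]))
      fun _ he _ hy => mul_mem_of_va5_mem (Ideal.subset_span (by simp)) he hy)
    (fun h => hnot (h (Ideal.subset_span (by simp))))

theorem colon_KI₉_KI₁₂ : Submodule.colon KI₉ KI₁₂ = Km := by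
  have hnot : va 4 ∉ KI₉ :=
    Ideal.notMem_span_of_map_eq_zero (dualPoint (Pi.single 4 1))
      (by simp [dualPoint_va]) (by simp [dualPoint_va, TrivSqZeroExt.ext_iff])
  exact Ideal.colon_eq_of_isMaximal Km_isMaximal
    (Ideal.le_colon_of_le_sup_span (E := {va 0, va 1, va 4}) (Y := {va 4})
      (Ideal.span_le_sup_span (Set.range_subset_iff.mpr fun k => by fin_cases k <;> simp))
      (Ideal.span_le_sup_span (by simp [Set.insert_subset_iff]))
      fun _ he _ hy => mul_mem_of_va5_mem (Ideal.subset_span (by simp)) he (by simp [hy]))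
    (fun h => hnot (h (Ideal.subset_span (by simp))))

theorem colon_KI₁₃_KI₁₄ : Submodule.colon KI₁₃ KI₁₄ = Km := by
  have hnot : va 4 ∉ KI₁₃ :=
    Ideal.notMem_span_of_map_eq_zero (dualPoint (Pi.single 4 1))
      (by simp [dualPoint_va]) (by simp [dualPoint_va, TrivSqZeroExt.ext_iff])
  refine Ideal.colon_eq_of_isMaximal Km_isMaximal
    (Ideal.le_colon_of_le_sup_span (E := {va 2, va 0, va 1, va 4}) (Y := {va 4})
      (Ideal.span_le_sup_span (Set.range_subset_iff.mpr fun k => by fin_cases k <;> simp))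
      (Ideal.span_le_sup_span (by simp [Set.insert_subset_iff])) fun e he y hy => ?_)
    (fun h => hnot (h (Ideal.subset_span (by simp))))
  rw [hy]
  rcases he with rfl | he
  · rw [va2_mul_va4]
    exact Ideal.mul_mem_left _ _ (Ideal.subset_span (by simp))
  · exact mul_mem_of_va5_mem (Ideal.subset_span (by simp)) he (by simp)

theorem colon_KI₁₁_Km : Submodule.colon KI₁₁ Km = Km := by
  have hnot : va 0 ∉ KI₁₁ :=
    Ideal.notMem_span_of_map_eq_zero (dualPoint (Pi.single 0 1))
      (by simp [dualPoint_va]) (by simp [dualPoint_va, TrivSqZeroExt.ext_iff])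
  have hKm : Km ≤ KI₁₁ ⊔ Ideal.span {va 0} :=
    Ideal.span_le_sup_span (Set.range_subset_iff.mpr fun k => by fin_cases k <;> simp)
  refine Ideal.colon_eq_of_isMaximal Km_isMaximal
    (Ideal.le_colon_of_le_sup_span hKm hKm fun e he y hy => ?_)
    (fun h => hnot (h (Ideal.subset_span ⟨0, rfl⟩)))
  rw [he, hy, va0_mul_va0]
  exact zero_mem _

theorem stmt_14 :
    Submodule.colon KI₈ KI₉ = KI₁₁ ∧
    Submodule.colon KI₉ KI₁₀ = Km ∧
    Submodule.colon KI₁₀ KI₁₁ = Km ∧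
    Submodule.colon KI₉ KI₁₂ = Km ∧
    Submodule.colon KI₇ KI₁₃ = KI₁₁ ∧
    Submodule.colon KI₁₃ KI₁₄ = Km ∧
    Submodule.colon KI₁₁ Km = Km :=
  ⟨colon_KI₈_KI₉, colon_KI₉_KI₁₀, colon_KI₁₀_KI₁₁, colon_KI₉_KI₁₂, colon_KI₇_KI₁₃,
    colon_KI₁₃_KI₁₄, colon_KI₁₁_Km⟩
end
end

section
/- Let W = ℚ[a₁,…,a₁₂]/(H + (a₁₂)), where H is the ideal generated by the 2×2 minors of the 4×5 matrix with rows (0, a₁, a₂+a₅, a₃+a₆+a₉, a₄+a₇+a₁₀), (a₁, a₂, a₃, a₄, a₈+a₁₁), (a₅, a₆, a₇, a₈, a₁₂), (a₉, a₁₀, a₁₁, a₁₂, 0). Set l₁ = a₂+a₄−a₆+a₁₀ and l₂ = a₂+2a₃+2a₅+3a₆−a₈+6a₉−a₁₀ in W. Then (a₆a₁₁) ∩ (l₁) = (a₆a₁₁) ∩ (l₂) = (a₁a₆a₁₁). -/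
open MvPolynomial

set_option synthInstance.maxHeartbeats 1000000
set_option maxHeartbeats 1000000

noncomputable section

/-- The ring `W = ℚ[a₁,…,a₁₂]/(H + (a₁₂))`, where `a₁₂ = X 11`. -/
abbrev SegW45 := MvPolynomial (Fin 12) ℚ ⧸ (segIdeal45 + Ideal.span {X 11})

/-- The residue class of `a_{i+1} = X i` in `W` (zero-based index). -/
def wa (i : Fin 12) : SegW45 :=
  Ideal.Quotient.mk (segIdeal45 + Ideal.span {X 11}) (X i)

/-!
Write `m = a₆a₁₁`. A short chain of 2×2 minors shows `aᵢ m = 0` in `W` for every `i ≠ 1`, so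
`(m) = ℚ m + (a₁ m)`, and `a₁ m` is an explicit multiple of `l₁` and of `l₂`. Hence
`(m) ∩ (l) = (a₁ m)` once `m ∉ (l)`. That last fact lives in degree two: for a symmetric matrix
`B`, the functional `p ↦ ∑ Bᵢⱼ ∂ᵢ∂ⱼp(0)` kills every multiple of a quadric it kills and every
multiple of a linear form `v` with `B v = 0`, so a `B` that kills the minors, `a₁₂` and `l` but not
`a₆a₁₁` separates `m` from `H + (a₁₂) + (l)`.
-/

open Matrix

section AnnIdeal

variable {R M : Type*} [CommRing R] [AddCommGroup M]

/-- The largest ideal contained in `ker φ`. -/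
def AddMonoidHom.annIdeal (φ : R →+ M) : Ideal R where
  carrier := {q | ∀ r, φ (r * q) = 0}
  add_mem' {a b} ha hb r := by simp only [mul_add, map_add, ha r, hb r, add_zero]
  zero_mem' r := by simp
  smul_mem' c a ha r := by simpa only [smul_eq_mul, ← mul_assoc] using ha (r * c)

theorem Ideal.Quotient.mk_notMem_span_singleton_of_le_annIdeal {φ : R →+ M} {I : Ideal R}
    {f l : R} (hI : I ≤ φ.annIdeal) (hl : l ∈ φ.annIdeal) (hf : φ f ≠ 0) :
    Ideal.Quotient.mk I f ∉ Ideal.span {Ideal.Quotient.mk I l} := by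
  intro h
  obtain ⟨c, hc⟩ := Ideal.mem_span_singleton'.mp h
  obtain ⟨p, rfl⟩ := Ideal.Quotient.mk_surjective c
  have hpf : p * l - f ∈ φ.annIdeal := hI (Ideal.Quotient.eq.mp (by rw [map_mul, hc]))
  have := hpf 1
  rw [one_mul, map_sub, hl p, zero_sub, neg_eq_zero] at this
  exact hf this

end AnnIdeal

theorem Ideal.span_singleton_inf_span_singleton_eq {K R : Type*} [Field K] [CommRing R]
    [Algebra K R] {m u l : R} (hm : ∀ c : R, ∃ γ : K, c * m - γ • m ∈ Ideal.span {u * m})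
    (hul : u * m ∈ Ideal.span {l}) (hml : m ∉ Ideal.span {l}) :
    Ideal.span {m} ⊓ Ideal.span {l} = Ideal.span {u * m} := by
  have hle : Ideal.span {u * m} ≤ Ideal.span {l} := (Ideal.span_singleton_le_iff_mem _).mpr hul
  refine le_antisymm (fun x hx => ?_) (le_inf ?_ hle)
  · obtain ⟨hxm, hxl⟩ := Ideal.mem_inf.mp hx
    obtain ⟨c, rfl⟩ := Ideal.mem_span_singleton'.mp hxm
    obtain ⟨γ, hγ⟩ := hm c
    by_cases h0 : γ = 0
    · simpa [h0] using hγ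
    · refine absurd ?_ hml
      have hγm : γ • m ∈ Ideal.span {l} := by simpa using Ideal.sub_mem _ hxl (hle hγ)
      simpa [smul_smul, inv_mul_cancel₀ h0] using Submodule.smul_of_tower_mem _ γ⁻¹ hγm
  · exact (Ideal.span_singleton_le_iff_mem _).mpr
      (Ideal.mul_mem_left _ _ (Ideal.mem_span_singleton_self m))

theorem MvPolynomial.exists_smul_sub_mem_of_aeval_surjective {σ K R : Type*} [CommSemiring K]
    [CommRing R] [Algebra K R] {x : σ → R}
    (hx : Function.Surjective (aeval x : MvPolynomial σ K →ₐ[K] R)) {m : R} {I : Ideal R}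
    (h : ∀ i, x i * m ∈ I) (c : R) : ∃ γ : K, c * m - γ • m ∈ I := by
  obtain ⟨p, rfl⟩ := hx c
  induction p using MvPolynomial.induction_on with
  | C a => exact ⟨a, by simp [Algebra.smul_def]⟩
  | add p q hp hq =>
    obtain ⟨γ, hγ⟩ := hp
    obtain ⟨δ, hδ⟩ := hq
    exact ⟨γ + δ, by simpa [add_mul, add_smul, add_sub_add_comm] using add_mem hγ hδ⟩
  | mul_X p i _ => exact ⟨0, by simpa [mul_assoc] using Ideal.mul_mem_left _ (aeval x p) (h i)⟩

namespace MvPolynomial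

section HessPairing

variable {σ K : Type*} [Fintype σ] [CommRing K]

def hessPairing (B : Matrix σ σ K) : MvPolynomial σ K →+ K where
  toFun p := ∑ i, ∑ j, B i j * constantCoeff (pderiv i (pderiv j p))
  map_zero' := by simp
  map_add' p q := by simp [mul_add, Finset.sum_add_distrib]

def gradAtZero (p : MvPolynomial σ K) : σ → K := fun i => constantCoeff (pderiv i p)

theorem hessPairing_mul {B : Matrix σ σ K} (hB : B.IsSymm) (r q : MvPolynomial σ K) :
    hessPairing B (r * q) = constantCoeff r * hessPairing B q + constantCoeff q * hessPairing B r +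
      2 * (gradAtZero r ⬝ᵥ B *ᵥ gradAtZero q) := by
  have hswap : ∑ i, ∑ j, B i j * (gradAtZero r j * gradAtZero q i) =
      ∑ i, ∑ j, B i j * (gradAtZero r i * gradAtZero q j) := by
    rw [Finset.sum_comm]
    exact Finset.sum_congr rfl fun i _ => Finset.sum_congr rfl fun j _ => by rw [hB.apply i j]
  simp only [hessPairing, AddMonoidHom.coe_mk, ZeroHom.coe_mk, pderiv_mul, map_add, map_mul]
  simp only [gradAtZero, dotProduct, mulVec, Finset.mul_sum] at hswap ⊢
  simp only [mul_add, Finset.sum_add_distrib]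
  rw [hswap]
  simp only [← Finset.sum_add_distrib]
  exact Finset.sum_congr rfl fun i _ => Finset.sum_congr rfl fun j _ => by ring

theorem mem_annIdeal_hessPairing {B : Matrix σ σ K} (hB : B.IsSymm) {q : MvPolynomial σ K}
    (h0 : constantCoeff q = 0) (hgrad : B *ᵥ gradAtZero q = 0) (hq : hessPairing B q = 0) :
    q ∈ (hessPairing B).annIdeal := fun r => by
  rw [hessPairing_mul hB, h0, hq, hgrad]
  simp

def linForm (v : σ → K) : MvPolynomial σ K := ∑ i, C (v i) * X i

theorem linForm_add (v w : σ → K) : linForm (v + w) = linForm v + linForm w := by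
  simp [linForm, add_mul, Finset.sum_add_distrib]

theorem linForm_zero : linForm (0 : σ → K) = 0 := by
  simp [linForm]

theorem constantCoeff_linForm (v : σ → K) : constantCoeff (linForm v) = 0 := by
  simp [linForm]

variable [DecidableEq σ]

theorem linForm_single (i : σ) : linForm (Pi.single i 1 : σ → K) = X i := by
  simp [linForm, Pi.single_apply]

theorem pderiv_linForm (i : σ) (v : σ → K) : pderiv i (linForm v) = C (v i) := by
  simp [linForm, Pi.single_apply]

theorem gradAtZero_linForm (v : σ → K) : gradAtZero (linForm v) = v := by
  ext i
  simp [gradAtZero, pderiv_linForm]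

theorem hessPairing_linForm (B : Matrix σ σ K) (v : σ → K) : hessPairing B (linForm v) = 0 := by
  simp [hessPairing, pderiv_linForm]

theorem hessPairing_linForm_mul_linForm {B : Matrix σ σ K} (hB : B.IsSymm) (u w : σ → K) :
    hessPairing B (linForm u * linForm w) = 2 * (u ⬝ᵥ B *ᵥ w) := by
  simp [hessPairing_mul hB, constantCoeff_linForm, hessPairing_linForm, gradAtZero_linForm]

theorem linForm_mem_annIdeal {B : Matrix σ σ K} (hB : B.IsSymm) {v : σ → K} (hv : B *ᵥ v = 0) :
    linForm v ∈ (hessPairing B).annIdeal :=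
  mem_annIdeal_hessPairing hB (constantCoeff_linForm v) (by rw [gradAtZero_linForm, hv])
    (hessPairing_linForm B v)

theorem linForm_mul_sub_mem_annIdeal {B : Matrix σ σ K} (hB : B.IsSymm) {a b c d : σ → K}
    (h : a ⬝ᵥ B *ᵥ b = c ⬝ᵥ B *ᵥ d) :
    linForm a * linForm b - linForm c * linForm d ∈ (hessPairing B).annIdeal := by
  have hgrad : gradAtZero (linForm a * linForm b - linForm c * linForm d) = 0 := by
    ext i
    simp [gradAtZero, pderiv_linForm, constantCoeff_linForm]
  refine mem_annIdeal_hessPairing hB (by simp [constantCoeff_linForm]) (by simp [hgrad]) ?_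
  rw [map_sub, hessPairing_linForm_mul_linForm hB, hessPairing_linForm_mul_linForm hB, h, sub_self]

end HessPairing

end MvPolynomial

def mkW : MvPolynomial (Fin 12) ℚ →ₐ[ℚ] SegW45 := Ideal.Quotient.mkₐ ℚ _

theorem mkW_X (i : Fin 12) : mkW (X i) = wa i := rfl

theorem wa_eleven : wa 11 = 0 :=
  Ideal.Quotient.eq_zero_iff_mem.mpr (Ideal.mem_sup_right (Ideal.mem_span_singleton_self _))

theorem aeval_wa_surjective :
    Function.Surjective (aeval wa : MvPolynomial (Fin 12) ℚ →ₐ[ℚ] SegW45) := by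
  rw [show aeval wa = mkW from algHom_ext fun i => by rw [aeval_X, mkW_X]]
  exact Ideal.Quotient.mkₐ_surjective ℚ _

def segMatW : Matrix (Fin 4) (Fin 5) SegW45 :=
  !![0, wa 0, wa 1 + wa 4, wa 2 + wa 5 + wa 8, wa 3 + wa 6 + wa 9;
     wa 0, wa 1, wa 2, wa 3, wa 7 + wa 10;
     wa 4, wa 5, wa 6, wa 7, 0;
     wa 8, wa 9, wa 10, 0, 0]

theorem mkW_segMat45 (i : Fin 4) (j : Fin 5) : mkW (segMat45 i j) = segMatW i j := by
  fin_cases i <;> fin_cases j <;> simp [segMat45, segMatW, mkW_X, wa_eleven]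

theorem segMatW_minor (i i' : Fin 4) (j j' : Fin 5) (h : i < i' ∧ j < j' := by decide) :
    segMatW i j * segMatW i' j' = segMatW i j' * segMatW i' j := by
  have hminor : mkW (segMat45 i j * segMat45 i' j' - segMat45 i j' * segMat45 i' j) = 0 :=
    Ideal.Quotient.eq_zero_iff_mem.mpr
      (Ideal.mem_sup_left (Ideal.subset_span ⟨i, i', j, j', h.1, h.2, rfl⟩))
  simpa only [map_sub, map_mul, mkW_segMat45, sub_eq_zero] using hminor

theorem wa_mul_wa10_eq_zero :
    wa 3 * wa 10 = 0 ∧ wa 6 * wa 10 = 0 ∧ wa 7 * wa 10 = 0 ∧ wa 8 * wa 10 = 0 ∧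
      wa 9 * wa 10 = 0 ∧ wa 10 * wa 10 = 0 := by
  have r3 : wa 2 * 0 = wa 3 * wa 10 := segMatW_minor 1 3 2 3
  have r6 : (wa 1 + wa 4) * 0 = (wa 3 + wa 6 + wa 9) * wa 10 := segMatW_minor 0 3 2 4
  have r7 : wa 6 * 0 = wa 7 * wa 10 := segMatW_minor 2 3 2 3
  have r78 : wa 4 * 0 = wa 7 * wa 8 := segMatW_minor 2 3 0 3
  have r8 : wa 0 * 0 = (wa 7 + wa 10) * wa 8 := segMatW_minor 1 3 0 4
  have r79 : wa 5 * 0 = wa 7 * wa 9 := segMatW_minor 2 3 1 3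
  have r9 : wa 1 * 0 = (wa 7 + wa 10) * wa 9 := segMatW_minor 1 3 1 4
  have r10 : wa 2 * 0 = (wa 7 + wa 10) * wa 10 := segMatW_minor 1 3 2 4
  have h3 : wa 3 * wa 10 = 0 := by linear_combination -r3
  have h7 : wa 7 * wa 10 = 0 := by linear_combination -r7
  have h9 : wa 9 * wa 10 = 0 := by linear_combination r79 - r9
  exact ⟨h3, by linear_combination -r6 - h3 - h9, h7, by linear_combination r78 - r8, h9,
    by linear_combination -h7 - r10⟩

theorem wa_mul_wa5_mul_wa10 {k : Fin 12} (hk : k ≠ 0) : wa k * (wa 5 * wa 10) = 0 := by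
  obtain ⟨h3, h6, h7, h8, h9, h10⟩ := wa_mul_wa10_eq_zero
  have r1 : wa 0 * wa 6 = (wa 1 + wa 4) * wa 5 := segMatW_minor 0 2 1 2
  have r2 : wa 1 * wa 6 = wa 2 * wa 5 := segMatW_minor 1 2 1 2
  have r4 : wa 0 * wa 6 = wa 2 * wa 4 := segMatW_minor 1 2 0 2
  have r4' : 0 * wa 7 = (wa 2 + wa 5 + wa 8) * wa 4 := segMatW_minor 0 2 0 3
  have r5 : wa 0 * wa 7 = (wa 2 + wa 5 + wa 8) * wa 5 := segMatW_minor 0 2 1 3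
  have h2 : wa 2 * (wa 5 * wa 10) = 0 := by linear_combination wa 1 * h6 - wa 10 * r2
  have h4 : wa 4 * (wa 5 * wa 10) = 0 := by
    linear_combination wa 10 * r4 - wa 10 * r4' - wa 0 * h6 - wa 4 * h8
  fin_cases k <;> simp only [Fin.reduceFinMk, Fin.isValue] at hk ⊢
  · exact absurd rfl hk
  · linear_combination wa 0 * h6 - h4 - wa 10 * r1
  · exact h2
  · linear_combination wa 5 * h3
  · exact h4
  · linear_combination wa 0 * h7 - h2 - wa 5 * h8 - wa 10 * r5
  · linear_combination wa 5 * h6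
  · linear_combination wa 5 * h7
  · linear_combination wa 5 * h8
  · linear_combination wa 5 * h9
  · linear_combination wa 5 * h10
  · simp [wa_eleven]

theorem exists_smul_sub_mem_span_wa0_mul (c : SegW45) :
    ∃ γ : ℚ, c * (wa 5 * wa 10) - γ • (wa 5 * wa 10) ∈ Ideal.span {wa 0 * (wa 5 * wa 10)} := by
  refine MvPolynomial.exists_smul_sub_mem_of_aeval_surjective aeval_wa_surjective (fun k => ?_) c
  rcases eq_or_ne k 0 with rfl | hk
  · exact Ideal.mem_span_singleton_self _
  · rw [wa_mul_wa5_mul_wa10 hk]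
    exact zero_mem _

theorem wa0_mul_eq_zero :
    wa 0 * wa 1 = 0 ∧ wa 0 * wa 4 = 0 ∧ wa 0 * wa 8 = 0 ∧ wa 0 * wa 2 = -(wa 0 * wa 5) := by
  have r1 : 0 * wa 2 = (wa 1 + wa 4) * wa 0 := segMatW_minor 0 1 0 2
  have r2 : 0 * wa 3 = (wa 2 + wa 5 + wa 8) * wa 0 := segMatW_minor 0 1 0 3
  have r4 : 0 * wa 5 = wa 0 * wa 4 := segMatW_minor 0 2 0 1
  have r8 : 0 * wa 9 = wa 0 * wa 8 := segMatW_minor 0 3 0 1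
  exact ⟨by linear_combination r4 - r1, by linear_combination -r4, by linear_combination -r8,
    by linear_combination r8 - r2⟩

theorem wa0_mul_wa5_mul_wa10_mem_span_l₁ :
    wa 0 * (wa 5 * wa 10) ∈ Ideal.span {wa 1 + wa 3 - wa 5 + wa 9} := by
  refine Ideal.mem_span_singleton'.mpr ⟨-(wa 0 * wa 9), ?_⟩
  obtain ⟨h1, -, -, h2⟩ := wa0_mul_eq_zero
  have r1 : wa 1 * wa 10 = wa 2 * wa 9 := segMatW_minor 1 3 1 2
  have r3 : wa 0 * 0 = (wa 3 + wa 6 + wa 9) * wa 9 := segMatW_minor 0 3 1 4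
  have r6 : wa 5 * wa 10 = wa 6 * wa 9 := segMatW_minor 2 3 1 2
  linear_combination wa 9 * h2 - (wa 9 + wa 10) * h1 + wa 0 * r1 + wa 0 * r3 - wa 0 * r6

theorem wa0_mul_wa5_mul_wa10_mem_span_l₂ : wa 0 * (wa 5 * wa 10) ∈
    Ideal.span {wa 1 + 2 * wa 2 + 2 * wa 4 + 3 * wa 5 - wa 7 + 6 * wa 8 - wa 9} := by
  refine Ideal.mem_span_singleton'.mpr ⟨-(wa 0 * wa 2), ?_⟩
  obtain ⟨h1, h4, h8, h2⟩ := wa0_mul_eq_zero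
  have r1 : wa 1 * wa 10 = wa 2 * wa 9 := segMatW_minor 1 3 1 2
  have r2 : wa 1 * wa 6 = wa 2 * wa 5 := segMatW_minor 1 2 1 2
  have r5 : wa 1 * 0 = (wa 7 + wa 10) * wa 5 := segMatW_minor 1 2 1 4
  linear_combination (wa 10 - wa 2 - wa 6) * h1 + (wa 7 - 2 * wa 2) * h2 - 2 * wa 2 * h4 -
    6 * wa 2 * h8 + wa 0 * r2 - wa 0 * r1 + wa 0 * r5

local notation "𝐞" => fun k : Fin 12 => (Pi.single k 1 : Fin 12 → ℚ)

def segVec : Matrix (Fin 4) (Fin 5) (Fin 12 → ℚ) :=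
  !![0, 𝐞 0, 𝐞 1 + 𝐞 4, 𝐞 2 + 𝐞 5 + 𝐞 8, 𝐞 3 + 𝐞 6 + 𝐞 9;
     𝐞 0, 𝐞 1, 𝐞 2, 𝐞 3, 𝐞 7 + 𝐞 10;
     𝐞 4, 𝐞 5, 𝐞 6, 𝐞 7, 𝐞 11;
     𝐞 8, 𝐞 9, 𝐞 10, 𝐞 11, 0]

theorem segMat45_eq_linForm (i : Fin 4) (j : Fin 5) : segMat45 i j = linForm (segVec i j) := by
  fin_cases i <;> fin_cases j <;> simp [segMat45, segVec, linForm_add, linForm_single, linForm_zero]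

theorem segIdeal45_sup_le_annIdeal {B : Matrix (Fin 12) (Fin 12) ℚ} (hB : B.IsSymm)
    (hminor : ∀ i i' : Fin 4, ∀ j j' : Fin 5, i < i' → j < j' →
      segVec i j ⬝ᵥ B *ᵥ segVec i' j' = segVec i j' ⬝ᵥ B *ᵥ segVec i' j)
    (h11 : B *ᵥ 𝐞 11 = 0) :
    segIdeal45 + Ideal.span {X 11} ≤ (hessPairing B).annIdeal := by
  refine sup_le (Ideal.span_le.mpr ?_) ((Ideal.span_singleton_le_iff_mem _).mpr ?_)
  · rintro _ ⟨i, i', j, j', hi, hj, rfl⟩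
    simp only [segMat45_eq_linForm]
    exact linForm_mul_sub_mem_annIdeal hB (hminor i i' j j' hi hj)
  · rw [← linForm_single]
    exact linForm_mem_annIdeal hB h11

theorem wa5_mul_wa10_notMem_span_linForm {B : Matrix (Fin 12) (Fin 12) ℚ} (hB : B.IsSymm)
    (hminor : ∀ i i' : Fin 4, ∀ j j' : Fin 5, i < i' → j < j' →
      segVec i j ⬝ᵥ B *ᵥ segVec i' j' = segVec i j' ⬝ᵥ B *ᵥ segVec i' j)
    (h11 : B *ᵥ 𝐞 11 = 0) (h510 : B 5 10 ≠ 0) {v : Fin 12 → ℚ} (hv : B *ᵥ v = 0) :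
    wa 5 * wa 10 ∉ Ideal.span {mkW (linForm v)} := by
  have hf : hessPairing B (X 5 * X 10) ≠ 0 := by
    rw [← linForm_single, ← linForm_single, hessPairing_linForm_mul_linForm hB]
    simpa using h510
  have := Ideal.Quotient.mk_notMem_span_singleton_of_le_annIdeal
    (segIdeal45_sup_le_annIdeal hB hminor h11) (linForm_mem_annIdeal hB hv) hf
  rwa [map_mul] at this

/-- Up to scale, `p ↦ ∑ Bᵢⱼ ∂ᵢ∂ⱼp(0)` for `B = gram₁` is the only functional on quadrics that
vanishes on the degree-two part of `H + (a₁₂) + (l₁)`; `gram₂` is the same for `l₂`. Both were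
found by solving that linear system. -/
def gram₁ : Matrix (Fin 12) (Fin 12) ℚ :=
  !![ 0,  0,  1, -1,  0, -1,  1,  0,  0,  0,  0,  0;
      0,  2, -3,  0, -1,  2,  0, -1,  0,  0,  1,  0;
      1, -3,  0,  2,  1,  0, -3,  1,  0,  1, -1,  0;
     -1,  0,  2, -1,  0, -1,  1,  0,  0,  0,  0,  0;
      0, -1,  1,  0,  1, -1,  0,  0,  0,  0,  0,  0;
     -1,  2,  0, -1, -1,  0,  2, -1,  0, -1,  1,  0;
      1,  0, -3,  1,  0,  2, -2,  0,  0,  1,  0,  0;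
      0, -1,  1,  0,  0, -1,  0,  0,  0,  0,  0,  0;
      0,  0,  0,  0,  0,  0,  0,  0,  0,  0,  0,  0;
      0,  0,  1,  0,  0, -1,  1,  0,  0, -1,  0,  0;
      0,  1, -1,  0,  0,  1,  0,  0,  0,  0,  0,  0;
      0,  0,  0,  0,  0,  0,  0,  0,  0,  0,  0,  0]

def gram₂ : Matrix (Fin 12) (Fin 12) ℚ :=
  !![   0,    0,    4,   69,    0,   -4, -112,  -47,    0,   43,   -1,    0;
        0,    8,  293,   77,   -4, -267, -137,   31,   43,   12,   -7,    0;
        4,  293,  168,  -38, -112, -137,   69,   -5,   -1,   -7,   -7,    0;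
       69,   77,  -38,   -7,  -47,   31,   -5,    0,    0,    0,    0,    0;
        0,   -4, -112,  -47,    4,  155,   60,    0,  -43,  -13,    0,    0;
       -4, -267, -137,   31,  155,  103,  -38,   -7,  -13,    7,    7,    0;
     -112, -137,   69,   -5,   60,  -38,   -2,    0,    0,    7,    0,    0;
      -47,   31,   -5,    0,    0,   -7,    0,    0,    0,    0,    0,    0;
        0,   43,   -1,    0,  -43,  -13,    0,    0,   14,    0,    0,    0;
       43,   12,   -7,    0,  -13,    7,    7,    0,    0,   -7,    0,    0;
       -1,   -7,   -7,    0,    0,    7,    0,    0,    0,    0,    0,    0;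
        0,    0,    0,    0,    0,    0,    0,    0,    0,    0,    0,    0]

theorem wa5_mul_wa10_notMem_span_l₁ : wa 5 * wa 10 ∉ Ideal.span {wa 1 + wa 3 - wa 5 + wa 9} := by
  have hl : mkW (linForm ![0, 1, 0, 1, 0, -1, 0, 0, 0, 1, 0, 0]) = wa 1 + wa 3 - wa 5 + wa 9 := by
    simp only [linForm, Fin.sum_univ_succ, Fin.isValue, cons_val_zero, C_0, zero_mul, cons_val_succ,
      C_1, Fin.succ_zero_eq_one, one_mul, Fin.succ_one_eq_two, Fin.reduceSucc, neg_mul,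
      Finset.univ_unique, Fin.default_eq_zero, cons_val_fin_one, Finset.sum_const_zero, add_zero,
      zero_add, map_add, mkW_X, map_neg]
    ring
  rw [← hl]
  exact wa5_mul_wa10_notMem_span_linForm (B := gram₁) (by decide +kernel) (by decide +kernel)
    (by decide +kernel) (by decide +kernel) (by decide +kernel)

theorem wa5_mul_wa10_notMem_span_l₂ : wa 5 * wa 10 ∉
    Ideal.span {wa 1 + 2 * wa 2 + 2 * wa 4 + 3 * wa 5 - wa 7 + 6 * wa 8 - wa 9} := by
  have hl : mkW (linForm ![0, 1, 2, 0, 2, 3, 0, -1, 6, -1, 0, 0]) =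
      wa 1 + 2 * wa 2 + 2 * wa 4 + 3 * wa 5 - wa 7 + 6 * wa 8 - wa 9 := by
    simp only [linForm, Fin.sum_univ_succ, Fin.isValue, cons_val_zero, C_0, zero_mul, cons_val_succ,
      C_1, Fin.succ_zero_eq_one, one_mul, map_ofNat, Fin.succ_one_eq_two, Fin.reduceSucc,
      neg_mul, Finset.univ_unique, Fin.default_eq_zero, cons_val_fin_one, Finset.sum_const_zero,
      add_zero, zero_add, map_add, mkW_X, map_mul, map_neg]
    ring
  rw [← hl]
  exact wa5_mul_wa10_notMem_span_linForm (B := gram₂) (by decide +kernel) (by decide +kernel)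
    (by decide +kernel) (by decide +kernel) (by decide +kernel)

theorem stmt_17 :
    Ideal.span {wa 5 * wa 10} ⊓ Ideal.span {wa 1 + wa 3 - wa 5 + wa 9} =
      Ideal.span {wa 0 * wa 5 * wa 10} ∧
    Ideal.span {wa 5 * wa 10} ⊓
        Ideal.span {wa 1 + 2 * wa 2 + 2 * wa 4 + 3 * wa 5 - wa 7 + 6 * wa 8 - wa 9} =
      Ideal.span {wa 0 * wa 5 * wa 10} := by
  rw [mul_assoc (wa 0)]
  exact ⟨Ideal.span_singleton_inf_span_singleton_eq exists_smul_sub_mem_span_wa0_mul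
      wa0_mul_wa5_mul_wa10_mem_span_l₁ wa5_mul_wa10_notMem_span_l₁,
    Ideal.span_singleton_inf_span_singleton_eq exists_smul_sub_mem_span_wa0_mul
      wa0_mul_wa5_mul_wa10_mem_span_l₂ wa5_mul_wa10_notMem_span_l₂⟩
end
end

section
/- Let k be a field, n ≥ 1 and c ≥ 1 integers, and let V_{n,c} be the c-th Veronese subring of S = k[x₁,…,x_n], i.e., the k-subalgebra of S generated by all monomials of degree c (whose degree-i component is S_{ic}). Then the elements x₁ᶜ, x₂ᶜ, …, x_nᶜ of V_{n,c} form a regular sequence on V_{n,c}. -/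
/-!
Grade `S = k[x₁,…,xₙ]` by total degree modulo `c`. The Veronese subring `V` is exactly the
degree-`0` part, so taking the degree-`0` component is a `V`-linear retraction `S → V`. Hence `V`
is a pure subring: `IS ∩ V = I` for every ideal `I` of `V`. Regularity therefore descends from `S`,
where `x_jᶜ` is a nonzerodivisor modulo the monomial ideal `(x_iᶜ : i ∈ T)` whenever `j ∉ T`.
Finally `(x₁ᶜ, …, xₙᶜ)` is proper since its elements have no constant term.
-/

open MvPolynomial

set_option synthInstance.maxHeartbeats 1000000
set_option maxHeartbeats 1000000

noncomputable section

/-- The `c`-th Veronese subring of `k[x₁,…,xₙ]`: the `k`-subalgebra generated by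
all monomials of degree `c`. -/
def veroneseSubring (k : Type*) [Field k] (n c : ℕ) :
    Subalgebra k (MvPolynomial (Fin n) k) :=
  Algebra.adjoin k
    {m | ∃ d : Fin n →₀ ℕ, (d.sum fun _ e => e) = c ∧ m = monomial d (1 : k)}

theorem Ideal.comap_map_algebraMap_of_leftInverse {R S : Type*} [CommRing R] [CommRing S]
    [Algebra R S] {ρ : S →ₗ[R] R} (hρ : Function.LeftInverse ρ (algebraMap R S))
    (I : Ideal R) : (I.map (algebraMap R S)).comap (algebraMap R S) = I := by
  refine le_antisymm (fun r hr => ?_) le_comap_map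
  have hρI : ρ '' ((I.map (algebraMap R S)).restrictScalars R) ⊆ I := by
    rw [← Ideal.smul_top_eq_map, ← Submodule.map_coe, Submodule.map_smul'']
    exact (Submodule.smul_mono le_rfl le_top).trans_eq (by rw [smul_eq_mul, Ideal.mul_top])
  simpa [hρ r] using hρI ⟨_, hr, rfl⟩

theorem Ideal.ofList_take_ofFn {R : Type*} [CommSemiring R] {n : ℕ} (v : Fin n → R) (i : ℕ) :
    Ideal.ofList ((List.ofFn v).take i) = Ideal.span (v '' {j | (j : ℕ) < i}) := by
  unfold Ideal.ofList
  congr 1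
  ext r
  simp only [Set.mem_ofPred_eq, List.mem_iff_getElem, List.length_take, List.length_ofFn,
    lt_min_iff, List.getElem_take, List.getElem_ofFn, Set.mem_image]
  constructor
  · rintro ⟨m, ⟨hmi, hmn⟩, rfl⟩
    exact ⟨⟨m, hmn⟩, hmi, rfl⟩
  · rintro ⟨j, hj, rfl⟩
    exact ⟨j, ⟨hj, j.2⟩, rfl⟩

theorem RingTheory.Sequence.isWeaklyRegular_ofFn_iff {R : Type*} [CommRing R] {n : ℕ}
    (v : Fin n → R) :
    IsWeaklyRegular R (List.ofFn v) ↔ ∀ (i : Fin n) (a : R),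
      v i * a ∈ Ideal.span (v '' {j | j < i}) → a ∈ Ideal.span (v '' {j | j < i}) := by
  simp only [isWeaklyRegular_iff, isSMulRegular_quotient_iff_mem_of_smul_mem, smul_eq_mul,
    Ideal.mul_top, Ideal.ofList_take_ofFn, Fin.forall_iff, List.length_ofFn, List.getElem_ofFn,
    Fin.lt_def]

theorem Finsupp.weight_const_one {σ M : Type*} [AddCommMonoidWithOne M] (d : σ →₀ ℕ) :
    Finsupp.weight (fun _ => (1 : M)) d = (d.degree : M) := by
  simp [Finsupp.weight_apply, Finsupp.degree_apply, Finsupp.sum]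

namespace MvPolynomial

theorem mem_span_X_pow_image_of_X_pow_mul_mem {σ R : Type*} [CommSemiring R] {T : Set σ}
    {j : σ} (hj : j ∉ T) (c : ℕ) {f : MvPolynomial σ R}
    (h : X j ^ c * f ∈ Ideal.span ((fun i => X i ^ c) '' T)) :
    f ∈ Ideal.span ((fun i => X i ^ c) '' T) := by
  classical
  have hspan : (fun i => (X i ^ c : MvPolynomial σ R)) '' T =
      (fun d => monomial d (1 : R)) '' ((fun i => Finsupp.single i c) '' T) := by
    rw [Set.image_image]
    simp only [X_pow_eq_monomial]
  rw [hspan, mem_ideal_span_monomial_image] at h ⊢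
  intro e he
  obtain ⟨_, ⟨i, hiT, rfl⟩, hle⟩ := h (Finsupp.single j c + e) (by
    rwa [mem_support_iff, X_pow_eq_monomial, coeff_monomial_mul, one_mul, ← mem_support_iff])
  refine ⟨_, ⟨i, hiT, rfl⟩, Finsupp.single_le_iff.mpr ?_⟩
  have hji : j ≠ i := fun h => hj (h ▸ hiT)
  simpa [Finsupp.single_apply, hji] using Finsupp.single_le_iff.mp hle

attribute [local instance] weightedGradedAlgebra in
theorem weightedHomogeneousComponent_mul_of_mem_zero {σ R M : Type*} [CommSemiring R]
    [AddCommMonoid M] [DecidableEq M] {w : σ → M} {a : MvPolynomial σ R}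
    (ha : a ∈ weightedHomogeneousSubmodule R w 0) (m : M) (p : MvPolynomial σ R) :
    weightedHomogeneousComponent w m (a * p) = a * weightedHomogeneousComponent w m p := by
  rw [← weightedDecomposition.decompose'_apply, ← weightedDecomposition.decompose'_apply]
  exact DirectSum.coe_decompose_mul_of_left_mem_zero (weightedHomogeneousSubmodule R w) ha

end MvPolynomial

section Veronese

variable {k : Type*} [Field k] {n c : ℕ}

theorem monomial_one_mem_veroneseSubring {d : Fin n →₀ ℕ} (hd : c ∣ d.degree) :
    monomial d (1 : k) ∈ veroneseSubring k n c := by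
  obtain ⟨m, hm⟩ := hd
  induction m generalizing d with
  | zero =>
    rw [mul_zero, Finsupp.degree_eq_zero_iff] at hm
    rw [hm, monomial_zero', C_1]
    exact one_mem _
  | succ m ih =>
    obtain ⟨e, hed, he⟩ :=
      d.exists_le_degree_eq c (hm ▸ Nat.le_mul_of_pos_right c m.succ_pos)
    have hde : (d - e).degree = c * m := by
      have := congrArg Finsupp.degree (tsub_add_cancel_of_le hed)
      rw [map_add, he, hm] at this
      linarith
    rw [← tsub_add_cancel_of_le hed, ← mul_one (1 : k), ← monomial_mul]
    exact mul_mem (ih hde) (Algebra.subset_adjoin ⟨e, he, rfl⟩)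

theorem mem_veroneseSubring_iff {p : MvPolynomial (Fin n) k} :
    p ∈ veroneseSubring k n c ↔
      p ∈ weightedHomogeneousSubmodule k (fun _ => (1 : ZMod c)) 0 := by
  have hweight (d : Fin n →₀ ℕ) : d.weight (fun _ => (1 : ZMod c)) = 0 ↔ c ∣ d.degree := by
    rw [Finsupp.weight_const_one, ZMod.natCast_eq_zero_iff]
  constructor
  · intro hp
    induction hp using Algebra.adjoin_induction with
    | mem x hx =>
      obtain ⟨d, hd, rfl⟩ := hx
      exact isWeightedHomogeneous_monomial _ _ _ ((hweight d).mpr ⟨1, by rw [mul_one]; exact hd⟩)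
    | algebraMap r => exact isWeightedHomogeneous_C _ r
    | add x y _ _ hx hy => exact add_mem hx hy
    | mul x y _ _ hx hy => simpa using hx.mul hy
  · intro hp
    induction hp using IsWeightedHomogeneous.induction_on with
    | zero => exact zero_mem _
    | add p q _ _ hp hq => exact add_mem hp hq
    | monomial d r hd =>
      rw [← mul_one r, ← smul_eq_mul, ← smul_monomial]
      exact Subalgebra.smul_mem _ (monomial_one_mem_veroneseSubring ((hweight d).mp hd)) r

def veroneseRetraction :
    MvPolynomial (Fin n) k →ₗ[veroneseSubring k n c] veroneseSubring k n c where
  toFun p := ⟨weightedHomogeneousComponent (fun _ => (1 : ZMod c)) 0 p,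
    mem_veroneseSubring_iff.mpr (weightedHomogeneousComponent_mem _ p 0)⟩
  map_add' p q := Subtype.ext (map_add _ p q)
  map_smul' a p :=
    Subtype.ext (weightedHomogeneousComponent_mul_of_mem_zero (mem_veroneseSubring_iff.mp a.2) 0 p)

theorem veroneseRetraction_leftInverse :
    Function.LeftInverse (veroneseRetraction (k := k) (n := n) (c := c))
      (algebraMap (veroneseSubring k n c) (MvPolynomial (Fin n) k)) := fun a =>
  Subtype.ext (by
    simp [veroneseRetraction, weightedHomogeneousComponent_of_mem (mem_veroneseSubring_iff.mp a.2)])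

theorem veroneseSubring_mem_span_of_mul_mem {v : Fin n → veroneseSubring k n c}
    (hv : ∀ i, (v i : MvPolynomial (Fin n) k) = X i ^ c) {T : Set (Fin n)} {j : Fin n}
    (hj : j ∉ T) {a : veroneseSubring k n c} (ha : v j * a ∈ Ideal.span (v '' T)) :
    a ∈ Ideal.span (v '' T) := by
  have hmap : (Ideal.span (v '' T)).map
      (algebraMap (veroneseSubring k n c) (MvPolynomial (Fin n) k)) =
        Ideal.span ((fun i => X i ^ c) '' T) := by
    rw [Ideal.map_span, Set.image_image]
    exact congrArg _ (Set.image_congr fun i _ => hv i)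
  rw [← Ideal.comap_map_algebraMap_of_leftInverse veroneseRetraction_leftInverse (Ideal.span _),
    Ideal.mem_comap, hmap] at ha ⊢
  refine mem_span_X_pow_image_of_X_pow_mul_mem hj c ?_
  simpa [hv j] using ha

end Veronese

theorem stmt_19_general (k : Type*) [Field k] (n c : ℕ) (hc : 1 ≤ c)
    (v : Fin n → veroneseSubring k n c)
    (hv : ∀ i, (v i : MvPolynomial (Fin n) k) = X i ^ c) :
    RingTheory.Sequence.IsRegular (veroneseSubring k n c) (List.ofFn v) := by
  refine ⟨(RingTheory.Sequence.isWeaklyRegular_ofFn_iff v).mpr fun i _ =>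
    veroneseSubring_mem_span_of_mul_mem hv (lt_irrefl i), ?_⟩
  rw [Ne, eq_comm, smul_eq_mul, Ideal.mul_top, Ideal.eq_top_iff_one]
  have hker : Ideal.ofList (List.ofFn v) ≤
      RingHom.ker (constantCoeff.comp (veroneseSubring k n c).val.toRingHom) := by
    refine Ideal.span_le.mpr ?_
    rintro _ hr
    obtain ⟨i, rfl⟩ := List.mem_ofFn.mp hr
    simp [hv, zero_pow (Nat.one_le_iff_ne_zero.mp hc)]
  intro h1
  simpa using hker h1

theorem stmt_19 (k : Type*) [Field k] (n c : ℕ) (hn : 1 ≤ n) (hc : 1 ≤ c)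
    (v : Fin n → veroneseSubring k n c)
    (hv : ∀ i, (v i : MvPolynomial (Fin n) k) = X i ^ c) :
    RingTheory.Sequence.IsRegular (veroneseSubring k n c) (List.ofFn v) :=
  stmt_19_general k n c hc v hv
end
end
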